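/- arXiv:2004.03638 — 8 statements merged into one kernel-verified Lean document; each statement's English description precedes it below -/
import Mathlib

section
/- Let Z be a real Hilbert space and let T, A : Z → Z be bounded linear operators. Suppose x, x̄ : [0,∞) → Z are differentiable with continuous derivatives, T x'(t) = A x(t) for all t ≥ 0, and T* x̄'(t) = A* x̄(t) for all t ≥ 0. Then for every t ≥ 0, ⟨x̄(0), T x(t)⟩ = ⟨x̄(t), T x(0)⟩, where ⟨·,·⟩ is the inner product of Z. -/
open ContinuousLinearMap
open scoped RealInnerProductSpace

/-!
Along the primal trajectory run backwards from time `t` and the dual trajectory run forwards,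
the pairing `s ↦ ⟪x̄ s, T (x (t - s))⟫` has derivative `⟪x̄' s, T x⟫ - ⟪x̄ s, T x'⟫`, and moving
`T` across the inner product turns the two equations of motion into the cancellation
`⟪x̄', T x⟫ = ⟪T* x̄', x⟫ = ⟪A* x̄, x⟫ = ⟪x̄, A x⟫ = ⟪x̄, T x'⟫`. So the pairing is constant on
`[0, t]`, and comparing its values at `0` and `t` is the claim.
-/

theorem inner_apply_eq_of_adjoint_eq {E F : Type*} [NormedAddCommGroup E]
    [InnerProductSpace ℝ E] [CompleteSpace E] [NormedAddCommGroup F] [InnerProductSpace ℝ F]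
    [CompleteSpace F] {T A : E →L[ℝ] F} {u u' : E} {v v' : F} (hu : T u' = A u)
    (hv : adjoint T v' = adjoint A v) :
    ⟪v', T u⟫ = ⟪v, T u'⟫ := by
  rw [← adjoint_inner_left, hv, adjoint_inner_left, hu]

theorem hasDerivAt_inner_apply_comp_sub {E F : Type*} [NormedAddCommGroup E] [NormedSpace ℝ E]
    [NormedAddCommGroup F] [InnerProductSpace ℝ F] (T : E →L[ℝ] F) {x : ℝ → E} {y : ℝ → F}
    {x' : E} {y' : F} {t s : ℝ} (hy : HasDerivAt y y' s) (hx : HasDerivAt x x' (t - s)) :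
    HasDerivAt (fun r => ⟪y r, T (x (t - r))⟫) (⟪y', T (x (t - s))⟫ - ⟪y s, T x'⟫) s := by
  have hTx_rev := T.hasFDerivAt.comp_hasDerivAt s (hx.comp_const_sub t s)
  refine (hy.inner ℝ hTx_rev).congr_deriv ?_
  rw [Function.comp_apply, map_neg, inner_neg_right, neg_add_eq_sub]

theorem primal_dual_conservation_general
    {Z : Type*} [NormedAddCommGroup Z] [InnerProductSpace ℝ Z] [CompleteSpace Z]
    (T A : Z →L[ℝ] Z) (x xb : ℝ → Z)
    (hx : ∀ t ∈ Set.Ici (0:ℝ), DifferentiableAt ℝ x t)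
    (hxb : ∀ t ∈ Set.Ici (0:ℝ), DifferentiableAt ℝ xb t)
    (hxeq : ∀ t ∈ Set.Ici (0:ℝ), T (deriv x t) = A (x t))
    (hxbeq : ∀ t ∈ Set.Ici (0:ℝ), (adjoint T) (deriv xb t) = (adjoint A) (xb t)) :
    ∀ t ∈ Set.Ici (0:ℝ), ⟪xb 0, T (x t)⟫ = ⟪xb t, T (x 0)⟫ := by
  intro t ht
  set pairing : ℝ → ℝ := fun s => ⟪xb s, T (x (t - s))⟫
  have hpairing : ∀ s ∈ Set.Icc 0 t, HasDerivAt pairing 0 s := by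
    rintro s ⟨hs0, hst⟩
    have hts : t - s ∈ Set.Ici (0:ℝ) := sub_nonneg.mpr hst
    have hderiv := hasDerivAt_inner_apply_comp_sub T (hxb s hs0).hasDerivAt (hx _ hts).hasDerivAt
    rwa [inner_apply_eq_of_adjoint_eq (hxeq _ hts) (hxbeq s hs0), sub_self] at hderiv
  have hconst := constant_of_has_deriv_right_zero
    (fun s hs => (hpairing s hs).continuousAt.continuousWithinAt)
    (fun s hs => (hpairing s (Set.Ico_subset_Icc_self hs)).hasDerivWithinAt)
    t ⟨ht, le_rfl⟩
  simpa [pairing] using hconst.symm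

/-- Conservation identity pairing a primal PIE trajectory with a dual PIE
trajectory: `⟨x̄(0), T x(t)⟩ = ⟨x̄(t), T x(0)⟩` for all `t ≥ 0`. -/
theorem primal_dual_conservation
    {Z : Type*} [NormedAddCommGroup Z] [InnerProductSpace ℝ Z] [CompleteSpace Z]
    (T A : Z →L[ℝ] Z) (x xb : ℝ → Z)
    (hx : ∀ t ∈ Set.Ici (0:ℝ), DifferentiableAt ℝ x t)
    (hx' : ContinuousOn (deriv x) (Set.Ici (0:ℝ)))
    (hxb : ∀ t ∈ Set.Ici (0:ℝ), DifferentiableAt ℝ xb t)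
    (hxb' : ContinuousOn (deriv xb) (Set.Ici (0:ℝ)))
    (hxeq : ∀ t ∈ Set.Ici (0:ℝ), T (deriv x t) = A (x t))
    (hxbeq : ∀ t ∈ Set.Ici (0:ℝ), (adjoint T) (deriv xb t) = (adjoint A) (xb t)) :
    ∀ t ∈ Set.Ici (0:ℝ), ⟪xb 0, T (x t)⟫ = ⟪xb t, T (x 0)⟫ :=
  primal_dual_conservation_general T A x xb hx hxb hxeq hxbeq
end

section
/- Let Z be a real Hilbert space, let T, A : Z → Z, B : ℝ^q → Z, C : Z → ℝ^r be bounded linear operators and D : ℝ^q → ℝ^r linear. Let w : [0,∞) → ℝ^q and w̄ : [0,∞) → ℝ^r be continuous, and suppose x, x̄ : [0,∞) → Z are differentiable with continuous derivatives, x(0) = 0, x̄(0) = 0, T x'(t) = A x(t) + B w(t) and T* x̄'(t) = A* x̄(t) + C* w̄(t) for all t ≥ 0. Define z(t) = C x(t) + D w(t) and z̄(t) = B* x̄(t) + D* w̄(t). Then for every t ≥ 0, ∫₀ᵗ ⟨z̄(θ), w(t−θ)⟩ dθ = ∫₀ᵗ ⟨w̄(θ), z(t−θ)⟩ dθ. 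-/
/-!
Fix `t ≥ 0` and put `φ(θ) = ⟪x̄(θ), T x(t - θ)⟫`. The two state equations and the definition
of the adjoint turn `φ'(θ)` into `⟪w̄(θ), z(t - θ)⟫ - ⟪z̄(θ), w(t - θ)⟫`, the `A`- and
`D`-terms cancelling in pairs. Since `φ(0) = φ(t) = 0` by the zero initial conditions, the
integral of `φ'` over `[0, t]` vanishes, which is the claim.
-/

open MeasureTheory Set ContinuousLinearMap
open scoped RealInnerProductSpace

section

variable {Z U Y : Type*}
  [NormedAddCommGroup Z] [InnerProductSpace ℝ Z] [CompleteSpace Z]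
  [NormedAddCommGroup U] [InnerProductSpace ℝ U] [CompleteSpace U]
  [NormedAddCommGroup Y] [InnerProductSpace ℝ Y] [CompleteSpace Y]

theorem inner_sub_inner_of_primal_dual (T A : Z →L[ℝ] Z) (B : U →L[ℝ] Z) (C : Z →L[ℝ] Y)
    (D : U →L[ℝ] Y) {x x' xb xb' : Z} {u : U} {y : Y} (h : T x' = A x + B u)
    (hb : adjoint T xb' = adjoint A xb + adjoint C y) :
    ⟪xb', T x⟫ - ⟪xb, T x'⟫ = ⟪y, C x + D u⟫ - ⟪adjoint B xb + adjoint D y, u⟫ := by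
  rw [← adjoint_inner_left, hb, h]
  simp only [inner_add_left, inner_add_right, adjoint_inner_left]
  ring

end

theorem HasDerivAt.inner_comp_sub {E : Type*} [NormedAddCommGroup E] [InnerProductSpace ℝ E]
    {f g : ℝ → E} {f' g' : E} {t θ : ℝ} (hf : HasDerivAt f f' θ)
    (hg : HasDerivAt g g' (t - θ)) :
    HasDerivAt (fun s => ⟪f s, g (t - s)⟫) (⟪f', g (t - θ)⟫ - ⟪f θ, g'⟫) θ := by
  have hreflect : HasDerivAt (fun s => g (t - s)) (-g') θ := by
    simpa [Function.comp_def] using hg.scomp θ ((hasDerivAt_id θ).const_sub t)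
  exact (hf.inner ℝ hreflect).congr_deriv (by rw [inner_neg_right]; ring)

theorem intervalIntegrable_inner_comp_sub {E : Type*} [NormedAddCommGroup E]
    [InnerProductSpace ℝ E] {f g : ℝ → E} {t : ℝ} (ht : 0 ≤ t) (hf : ContinuousOn f (Ici 0))
    (hg : ContinuousOn g (Ici 0)) :
    IntervalIntegrable (fun θ => ⟪f θ, g (t - θ)⟫) volume 0 t := by
  refine ContinuousOn.intervalIntegrable ?_
  rw [uIcc_of_le ht]
  exact (hf.mono Icc_subset_Ici_self).inner
    (hg.comp (continuousOn_const.sub continuousOn_id) fun θ hθ => sub_nonneg.mpr hθ.2)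

theorem intervalIntegral.integral_eq_of_hasDerivAt_sub {f g φ : ℝ → ℝ} {a b : ℝ}
    (hφ : ∀ θ ∈ uIcc a b, HasDerivAt φ (g θ - f θ) θ) (hf : IntervalIntegrable f volume a b)
    (hg : IntervalIntegrable g volume a b) (hab : φ a = φ b) :
    ∫ θ in a..b, f θ = ∫ θ in a..b, g θ := by
  have := integral_eq_sub_of_hasDerivAt hφ (hg.sub hf)
  rw [integral_sub hg hf, hab, sub_self, sub_eq_zero] at this
  exact this.symm

theorem primal_dual_io_pairing_general
    {Z : Type*} [NormedAddCommGroup Z] [InnerProductSpace ℝ Z] [CompleteSpace Z]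
    {q r : ℕ}
    (T A : Z →L[ℝ] Z)
    (B : EuclideanSpace ℝ (Fin q) →L[ℝ] Z)
    (C : Z →L[ℝ] EuclideanSpace ℝ (Fin r))
    (D : EuclideanSpace ℝ (Fin q) →L[ℝ] EuclideanSpace ℝ (Fin r))
    (w : ℝ → EuclideanSpace ℝ (Fin q)) (wb : ℝ → EuclideanSpace ℝ (Fin r))
    (hw : Continuous w) (hwb : Continuous wb)
    (x xb : ℝ → Z)
    (hx : ∀ t ∈ Set.Ici (0:ℝ), DifferentiableAt ℝ x t)
    (hxb : ∀ t ∈ Set.Ici (0:ℝ), DifferentiableAt ℝ xb t)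
    (hx0 : x 0 = 0) (hxb0 : xb 0 = 0)
    (hxeq : ∀ t ∈ Set.Ici (0:ℝ), T (deriv x t) = A (x t) + B (w t))
    (hxbeq : ∀ t ∈ Set.Ici (0:ℝ),
      (adjoint T) (deriv xb t) = (adjoint A) (xb t) + (adjoint C) (wb t))
    (z : ℝ → EuclideanSpace ℝ (Fin r)) (zb : ℝ → EuclideanSpace ℝ (Fin q))
    (hz : ∀ t, z t = C (x t) + D (w t))
    (hzb : ∀ t, zb t = (adjoint B) (xb t) + (adjoint D) (wb t)) :
    ∀ t ∈ Set.Ici (0:ℝ),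
      (∫ θ in (0:ℝ)..t, ⟪zb θ, w (t - θ)⟫)
        = ∫ θ in (0:ℝ)..t, ⟪wb θ, z (t - θ)⟫ := by
  intro t ht
  have hxc : ContinuousOn x (Ici 0) := fun s hs => (hx s hs).continuousAt.continuousWithinAt
  have hxbc : ContinuousOn xb (Ici 0) := fun s hs => (hxb s hs).continuousAt.continuousWithinAt
  have hzc : ContinuousOn z (Ici 0) := by
    rw [funext hz]; fun_prop
  have hzbc : ContinuousOn zb (Ici 0) := by
    rw [funext hzb]; fun_prop
  refine intervalIntegral.integral_eq_of_hasDerivAt_sub (φ := fun θ => ⟪xb θ, T (x (t - θ))⟫)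
    (fun θ hθ => ?_) (intervalIntegrable_inner_comp_sub ht hzbc hw.continuousOn)
    (intervalIntegrable_inner_comp_sub ht hwb.continuousOn hzc) (by simp [hx0, hxb0])
  rw [uIcc_of_le ht] at hθ
  have hθ₀ : θ ∈ Ici 0 := hθ.1
  have hθt : t - θ ∈ Ici 0 := sub_nonneg.mpr hθ.2
  show HasDerivAt _ (⟪wb θ, z (t - θ)⟫ - ⟪zb θ, w (t - θ)⟫) θ
  rw [hz, hzb, ← inner_sub_inner_of_primal_dual T A B C D (hxeq _ hθt) (hxbeq θ hθ₀)]
  exact (hxb θ hθ₀).hasDerivAt.inner_comp_sub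
    (T.hasFDerivAt.comp_hasDerivAt _ (hx (t - θ) hθt).hasDerivAt)

/-- Time-reversed pairing identity between the input–output signals of a primal
PIE system and its dual, with zero initial conditions:
`∫₀ᵗ ⟨z̄(θ), w(t−θ)⟩ dθ = ∫₀ᵗ ⟨w̄(θ), z(t−θ)⟩ dθ`. -/
theorem primal_dual_io_pairing
    {Z : Type*} [NormedAddCommGroup Z] [InnerProductSpace ℝ Z] [CompleteSpace Z]
    {q r : ℕ}
    (T A : Z →L[ℝ] Z)
    (B : EuclideanSpace ℝ (Fin q) →L[ℝ] Z)
    (C : Z →L[ℝ] EuclideanSpace ℝ (Fin r))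
    (D : EuclideanSpace ℝ (Fin q) →L[ℝ] EuclideanSpace ℝ (Fin r))
    (w : ℝ → EuclideanSpace ℝ (Fin q)) (wb : ℝ → EuclideanSpace ℝ (Fin r))
    (hw : Continuous w) (hwb : Continuous wb)
    (x xb : ℝ → Z)
    (hx : ∀ t ∈ Set.Ici (0:ℝ), DifferentiableAt ℝ x t)
    (hx' : ContinuousOn (deriv x) (Set.Ici (0:ℝ)))
    (hxb : ∀ t ∈ Set.Ici (0:ℝ), DifferentiableAt ℝ xb t)
    (hxb' : ContinuousOn (deriv xb) (Set.Ici (0:ℝ)))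
    (hx0 : x 0 = 0) (hxb0 : xb 0 = 0)
    (hxeq : ∀ t ∈ Set.Ici (0:ℝ), T (deriv x t) = A (x t) + B (w t))
    (hxbeq : ∀ t ∈ Set.Ici (0:ℝ),
      (adjoint T) (deriv xb t) = (adjoint A) (xb t) + (adjoint C) (wb t))
    (z : ℝ → EuclideanSpace ℝ (Fin r)) (zb : ℝ → EuclideanSpace ℝ (Fin q))
    (hz : ∀ t, z t = C (x t) + D (w t))
    (hzb : ∀ t, zb t = (adjoint B) (xb t) + (adjoint D) (wb t)) :
    ∀ t ∈ Set.Ici (0:ℝ),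
      (∫ θ in (0:ℝ)..t, ⟪zb θ, w (t - θ)⟫)
        = ∫ θ in (0:ℝ)..t, ⟪wb θ, z (t - θ)⟫ :=
  primal_dual_io_pairing_general T A B C D w wb hw hwb x xb hx hxb hx0 hxb0 hxeq hxbeq z zb hz hzb
end

section
/- Let Z be a real Hilbert space and let T, A : Z → Z be bounded linear operators. Suppose there exist ε > 0 and a bounded self-adjoint linear operator P : Z → Z which is coercive (i.e., there exists α > 0 with ⟨x, P x⟩ ≥ α‖x‖² for all x ∈ Z) such that ⟨x, (T* P A + A* P T) x⟩ ≤ −ε ‖T x‖² for all x ∈ Z. Then there exist M > 0 and α' > 0 such that every differentiable x : [0,∞) → Z satisfying T x'(t) = A x(t) for all t ≥ 0 satisfies ‖T x(t)‖ ≤ M e^{−α' t} ‖T x(0)‖ for all t ≥ 0. -/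
/-!
The Lyapunov functional `V(t) = ⟪T x(t), P T x(t)⟫` is equivalent to `‖T x(t)‖²`, since
`α ‖z‖² ≤ ⟪z, P z⟫ ≤ (‖P‖ + 1) ‖z‖²`. Along a solution of `T ẋ = A x` its derivative is
`⟪x, (T* P A + A* P T) x⟫ ≤ -ε ‖T x‖² ≤ -(ε / (‖P‖ + 1)) V`, so Grönwall's inequality gives
exponential decay of `V`, hence of `‖T x(t)‖` at half the rate.
-/

open ContinuousLinearMap Set Real
open scoped RealInnerProductSpace

theorem le_mul_exp_of_hasDerivAt_le_mul {f f' : ℝ → ℝ} {K a : ℝ}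
    (hf : ∀ s ∈ Ici a, HasDerivAt f (f' s) s) (bound : ∀ s ∈ Ici a, f' s ≤ K * f s) :
    ∀ t ∈ Ici a, f t ≤ f a * exp (K * (t - a)) := by
  intro t ht
  have hcont : ContinuousOn f (Icc a t) := fun s hs ↦ (hf s hs.1).continuousAt.continuousWithinAt
  have h := le_gronwallBound_of_liminf_deriv_right_le (K := K) (ε := 0) hcont
    (fun s hs _ hr ↦ (hf s hs.1).hasDerivWithinAt.liminf_right_slope_le hr) le_rfl
    (fun s hs ↦ (add_zero (K * f s)).symm ▸ bound s hs.1) t ⟨ht, le_rfl⟩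
  rwa [gronwallBound_ε0] at h

theorem le_sqrt_mul_exp_mul_of_mul_sq_le {a b α K c t : ℝ} (ha : 0 ≤ a) (hb : 0 ≤ b)
    (hα : 0 < α) (hK : 0 ≤ K) (h : α * a ^ 2 ≤ K * exp (-c * t) * b ^ 2) :
    a ≤ √(K / α) * exp (-(c / 2) * t) * b := by
  have hsq : (√(K / α) * exp (-(c / 2) * t) * b) ^ 2 = K * exp (-c * t) * b ^ 2 / α := by
    rw [mul_pow, mul_pow, sq_sqrt (by positivity), ← exp_nat_mul]
    field_simp
    ring_nf
  rw [← pow_le_pow_iff_left₀ ha (by positivity) two_ne_zero, hsq, le_div_iff₀ hα]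
  rwa [mul_comm (a ^ 2)]

section Lyapunov

variable {E : Type*} [NormedAddCommGroup E] [InnerProductSpace ℝ E]

theorem real_inner_apply_self_le_opNorm_mul_sq (P : E →L[ℝ] E) (z : E) :
    ⟪z, P z⟫ ≤ ‖P‖ * ‖z‖ ^ 2 :=
  calc ⟪z, P z⟫ ≤ ‖z‖ * ‖P z‖ := real_inner_le_norm _ _
    _ ≤ ‖z‖ * (‖P‖ * ‖z‖) := by gcongr; exact P.le_opNorm z
    _ = ‖P‖ * ‖z‖ ^ 2 := by ring

theorem inner_adjoint_comp_add_adjoint_comp_apply [CompleteSpace E] (T A P : E →L[ℝ] E) (x : E) :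
    ⟪x, ((adjoint T).comp (P.comp A) + (adjoint A).comp (P.comp T)) x⟫ =
      ⟪T x, P (A x)⟫ + ⟪A x, P (T x)⟫ := by
  simp only [add_apply, comp_apply, inner_add_right, adjoint_inner_right]

theorem HasDerivAt.inner_apply_self {P : E →L[ℝ] E} {y : ℝ → E} {y' : E} {s : ℝ}
    (hy : HasDerivAt y y' s) :
    HasDerivAt (fun u ↦ ⟪y u, P (y u)⟫) (⟪y s, P y'⟫ + ⟪y', P (y s)⟫) s :=
  hy.inner ℝ (P.hasFDerivAt.comp_hasDerivAt s hy)

theorem mul_norm_sq_le_mul_exp_of_lyapunov {P : E →L[ℝ] E} {α ε : ℝ} (hε : 0 ≤ ε)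
    (hcoer : ∀ z : E, α * ‖z‖ ^ 2 ≤ ⟪z, P z⟫) {y y' : ℝ → E}
    (hy : ∀ s ∈ Ici (0 : ℝ), HasDerivAt y (y' s) s)
    (hdecay : ∀ s ∈ Ici (0 : ℝ), ⟪y s, P (y' s)⟫ + ⟪y' s, P (y s)⟫ ≤ -ε * ‖y s‖ ^ 2) :
    ∀ t ∈ Ici (0 : ℝ),
      α * ‖y t‖ ^ 2 ≤ (‖P‖ + 1) * exp (-(ε / (‖P‖ + 1)) * t) * ‖y 0‖ ^ 2 := by
  intro t ht
  have hV_le (z : E) : ⟪z, P z⟫ ≤ (‖P‖ + 1) * ‖z‖ ^ 2 :=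
    (real_inner_apply_self_le_opNorm_mul_sq P z).trans (by gcongr; linarith)
  have hV_deriv_le (s : ℝ) (hs : s ∈ Ici (0 : ℝ)) :
      ⟪y s, P (y' s)⟫ + ⟪y' s, P (y s)⟫ ≤ -(ε / (‖P‖ + 1)) * ⟪y s, P (y s)⟫ :=
    calc _ ≤ -ε * ‖y s‖ ^ 2 := hdecay s hs
      _ = -(ε / (‖P‖ + 1)) * ((‖P‖ + 1) * ‖y s‖ ^ 2) := by field_simp
      _ ≤ -(ε / (‖P‖ + 1)) * ⟪y s, P (y s)⟫ :=
        mul_le_mul_of_nonpos_left (hV_le _) (neg_nonpos.mpr (by positivity))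
  have hV_decay :=
    le_mul_exp_of_hasDerivAt_le_mul (fun s hs ↦ (hy s hs).inner_apply_self) hV_deriv_le t ht
  rw [sub_zero] at hV_decay
  calc α * ‖y t‖ ^ 2 ≤ ⟪y t, P (y t)⟫ := hcoer _
    _ ≤ ⟪y 0, P (y 0)⟫ * exp (-(ε / (‖P‖ + 1)) * t) := hV_decay
    _ ≤ (‖P‖ + 1) * ‖y 0‖ ^ 2 * exp (-(ε / (‖P‖ + 1)) * t) := by gcongr; exact hV_le _
    _ = (‖P‖ + 1) * exp (-(ε / (‖P‖ + 1)) * t) * ‖y 0‖ ^ 2 := by ring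

end Lyapunov

theorem primal_LPI_stability_general
    {Z : Type*} [NormedAddCommGroup Z] [InnerProductSpace ℝ Z] [CompleteSpace Z]
    (T A : Z →L[ℝ] Z) (ε : ℝ) (hε : 0 < ε)
    (P : Z →L[ℝ] Z)
    (hPcoer : ∃ α > (0:ℝ), ∀ x : Z, α * ‖x‖^2 ≤ ⟪x, P x⟫)
    (hLPI : ∀ x : Z,
      ⟪x, ((adjoint T).comp (P.comp A) + (adjoint A).comp (P.comp T)) x⟫
        ≤ -ε * ‖T x‖^2) :
    ∃ M > (0:ℝ), ∃ α' > (0:ℝ), ∀ x : ℝ → Z,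
      (∀ t ∈ Set.Ici (0:ℝ), DifferentiableAt ℝ x t) →
      (∀ t ∈ Set.Ici (0:ℝ), T (deriv x t) = A (x t)) →
      ∀ t ∈ Set.Ici (0:ℝ), ‖T (x t)‖ ≤ M * Real.exp (-α' * t) * ‖T (x 0)‖ := by
  obtain ⟨α, hα, hcoer⟩ := hPcoer
  refine ⟨√((‖P‖ + 1) / α), by positivity, ε / (‖P‖ + 1) / 2, by positivity, ?_⟩
  intro x hdiff hode t ht
  have hTx : ∀ s ∈ Ici (0 : ℝ), HasDerivAt (fun u ↦ T (x u)) (A (x s)) s := fun s hs ↦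
    hode s hs ▸ T.hasFDerivAt.comp_hasDerivAt s (hdiff s hs).hasDerivAt
  have hdecay (s : ℝ) (_ : s ∈ Ici (0 : ℝ)) :
      ⟪T (x s), P (A (x s))⟫ + ⟪A (x s), P (T (x s))⟫ ≤ -ε * ‖T (x s)‖ ^ 2 :=
    inner_adjoint_comp_add_adjoint_comp_apply T A P (x s) ▸ hLPI (x s)
  exact le_sqrt_mul_exp_mul_of_mul_sq_le (norm_nonneg _) (norm_nonneg _) hα (by positivity)
    (mul_norm_sq_le_mul_exp_of_lyapunov hε.le hcoer hTx hdecay t ht)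

/-- Primal LPI for Stability (Theorem 11): feasibility of the operator
inequality `T*PA + A*PT ≼ −ε T*T` with `P` self-adjoint, bounded, coercive
implies exponential stability of the PIE `T ẋ = A x`. -/
theorem primal_LPI_stability
    {Z : Type*} [NormedAddCommGroup Z] [InnerProductSpace ℝ Z] [CompleteSpace Z]
    (T A : Z →L[ℝ] Z) (ε : ℝ) (hε : 0 < ε)
    (P : Z →L[ℝ] Z) (hPsa : IsSelfAdjoint P)
    (hPcoer : ∃ α > (0:ℝ), ∀ x : Z, α * ‖x‖^2 ≤ ⟪x, P x⟫)
    (hLPI : ∀ x : Z,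
      ⟪x, ((adjoint T).comp (P.comp A) + (adjoint A).comp (P.comp T)) x⟫
        ≤ -ε * ‖T x‖^2) :
    ∃ M > (0:ℝ), ∃ α' > (0:ℝ), ∀ x : ℝ → Z,
      (∀ t ∈ Set.Ici (0:ℝ), DifferentiableAt ℝ x t) →
      (∀ t ∈ Set.Ici (0:ℝ), T (deriv x t) = A (x t)) →
      ∀ t ∈ Set.Ici (0:ℝ), ‖T (x t)‖ ≤ M * Real.exp (-α' * t) * ‖T (x 0)‖ :=
  primal_LPI_stability_general T A ε hε P hPcoer hLPI
end

section
/- Let Z be a real Hilbert space, let T, A : Z → Z be bounded linear operators, and let P : Z → Z be a bounded self-adjoint linear operator satisfying ⟨x, (T P A* + A P T*) x⟩ ≤ −ε ‖T* x‖² for all x ∈ Z, for some ε > 0. Let y : [0,∞) → Z be differentiable with T* y'(t) = A* y(t) for all t ≥ 0. Then the function V(t) := ⟨T* y(t), P T* y(t)⟩ is differentiable and satisfies V'(t) ≤ −ε ‖T* y(t)‖² for all t ≥ 0. -/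
open MeasureTheory Filter Topology ContinuousLinearMap
open scoped RealInnerProductSpace

/-- Lyapunov dissipation inequality along trajectories of the dual PIE
`T* ẏ = A* y`: the function `V(t) = ⟨T* y(t), P T* y(t)⟩` is differentiable
with `V'(t) ≤ −ε ‖T* y(t)‖²`. -/
theorem dual_lyapunov_dissipation
    {Z : Type*} [NormedAddCommGroup Z] [InnerProductSpace ℝ Z] [CompleteSpace Z]
    (T A : Z →L[ℝ] Z) (ε : ℝ) (hε : 0 < ε)
    (P : Z →L[ℝ] Z) (hPsa : IsSelfAdjoint P)
    (hLPI : ∀ x : Z,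
      ⟪x, (T.comp (P.comp (adjoint A)) + A.comp (P.comp (adjoint T))) x⟫
        ≤ -ε * ‖(adjoint T) x‖^2)
    (y : ℝ → Z)
    (hy : ∀ t ∈ Set.Ici (0:ℝ), DifferentiableAt ℝ y t)
    (hyeq : ∀ t ∈ Set.Ici (0:ℝ), (adjoint T) (deriv y t) = (adjoint A) (y t)) :
    ∀ t ∈ Set.Ici (0:ℝ),
      DifferentiableAt ℝ (fun s => ⟪(adjoint T) (y s), P ((adjoint T) (y s))⟫) t ∧
      deriv (fun s => ⟪(adjoint T) (y s), P ((adjoint T) (y s))⟫) t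
        ≤ -ε * ‖(adjoint T) (y t)‖^2 := by
  intro t ht
  have hyd : HasDerivAt y (deriv y t) t := (hy t ht).hasDerivAt
  have hx : HasDerivAt (fun s => (adjoint T) (y s)) ((adjoint T) (deriv y t)) t :=
    (adjoint T).hasFDerivAt.comp_hasDerivAt t hyd
  have hPx : HasDerivAt (fun s => P ((adjoint T) (y s))) (P ((adjoint T) (deriv y t))) t :=
    P.hasFDerivAt.comp_hasDerivAt t hx
  have hV : HasDerivAt (fun s => ⟪(adjoint T) (y s), P ((adjoint T) (y s))⟫)
      (⟪(adjoint T) (y t), P ((adjoint T) (deriv y t))⟫ +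
        ⟪(adjoint T) (deriv y t), P ((adjoint T) (y t))⟫) t :=
    hx.inner ℝ hPx
  refine ⟨hV.differentiableAt, ?_⟩
  rw [hV.deriv, hyeq t ht]
  have key := hLPI (y t)
  simp only [ContinuousLinearMap.add_apply, ContinuousLinearMap.comp_apply,
    inner_add_right] at key
  calc ⟪(adjoint T) (y t), P ((adjoint A) (y t))⟫ +
        ⟪(adjoint A) (y t), P ((adjoint T) (y t))⟫
      = ⟪y t, T (P ((adjoint A) (y t)))⟫ + ⟪y t, A (P ((adjoint T) (y t)))⟫ := by
        rw [ContinuousLinearMap.adjoint_inner_left, ContinuousLinearMap.adjoint_inner_left]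
    _ ≤ -ε * ‖(adjoint T) (y t)‖^2 := key
end

section
/- Let Z be a real Hilbert space and let T, A : Z → Z be bounded linear operators. Suppose there exist ε > 0 and a bounded self-adjoint coercive linear operator P : Z → Z (i.e., there exists α > 0 with ⟨x, P x⟩ ≥ α‖x‖² for all x ∈ Z) such that ⟨x, (T P A* + A P T*) x⟩ ≤ −ε ‖T* x‖² for all x ∈ Z. Then every differentiable y : [0,∞) → Z satisfying T* y'(t) = A* y(t) for all t ≥ 0 satisfies ‖T* y(t)‖ → 0 as t → ∞; moreover there exist M > 0 and k > 0 such that ⟨T* y(t), P T* y(t)⟩ ≤ M e^{−kt} ⟨T* y(0), P T* y(0)⟩ for all t ≥ 0. -/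
open Filter Topology ContinuousLinearMap Set
open scoped RealInnerProductSpace

/-!
Along a trajectory, `V t = ⟪z t, P (z t)⟫` with `z = T* y` is a Lyapunov function: since
`ż = T* ẏ = A* y`, its derivative is `⟪y, (T P A* + A P T*) y⟫ ≤ -ε ‖z‖²`, and
`⟪z, P z⟫ ≤ ‖P‖ ‖z‖²` turns this into `V' ≤ -k V` with `k = ε / (‖P‖ + 1)` (the `+ 1`
covers `‖P‖ = 0`). Grönwall gives `V t ≤ e^{-kt} V 0`, and coercivity `α ‖z‖² ≤ V` then
forces `‖z t‖ → 0`.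
-/

theorem le_exp_mul_mul_of_hasDerivAt_le_mul {g g' : ℝ → ℝ} {c : ℝ}
    (hg : ∀ t ∈ Ici (0 : ℝ), HasDerivAt g (g' t) t) (hg' : ∀ t ∈ Ici (0 : ℝ), g' t ≤ c * g t) :
    ∀ t ∈ Ici (0 : ℝ), g t ≤ Real.exp (c * t) * g 0 := by
  intro t ht
  have hIcc : Icc 0 t ⊆ Ici 0 := Icc_subset_Ici_self
  have := le_gronwallBound_of_liminf_deriv_right_le (ε := 0) (δ := g 0)
    (fun s hs => (hg s (hIcc hs)).continuousAt.continuousWithinAt)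
    (fun s hs _ hr =>
      (hg s (hIcc (Ico_subset_Icc_self hs))).hasDerivWithinAt.liminf_right_slope_le hr)
    le_rfl (fun s hs => by simpa using hg' s (hIcc (Ico_subset_Icc_self hs))) t ⟨ht, le_rfl⟩
  simpa [gronwallBound_ε0, mul_comm] using this

theorem tendsto_norm_zero_of_mul_sq_le_exp {E : Type*} [SeminormedAddGroup E] {f : ℝ → E}
    {α k C : ℝ} (hα : 0 < α) (hk : 0 < k)
    (h : ∀ t ∈ Ici (0 : ℝ), α * ‖f t‖ ^ 2 ≤ C * Real.exp (-k * t)) :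
    Tendsto (fun t => ‖f t‖) atTop (𝓝 0) := by
  have hexp : Tendsto (fun t => C / α * Real.exp (-k * t)) atTop (𝓝 0) := by
    simpa using ((Real.tendsto_exp_atBot.comp
      (tendsto_id.const_mul_atTop_of_neg (neg_lt_zero.2 hk))).const_mul (C / α))
  have hsq : Tendsto (fun t => ‖f t‖ ^ 2) atTop (𝓝 0) := by
    refine squeeze_zero' (.of_forall fun t => by positivity) ?_ hexp
    filter_upwards [eventually_ge_atTop 0] with t ht
    rw [div_mul_eq_mul_div, le_div_iff₀ hα, mul_comm]
    exact h t ht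
  simpa [Real.sqrt_sq (norm_nonneg _)] using hsq.sqrt

section

variable {Z : Type*} [NormedAddCommGroup Z] [InnerProductSpace ℝ Z]

theorem real_inner_apply_self_le (P : Z →L[ℝ] Z) (x : Z) : ⟪x, P x⟫ ≤ ‖P‖ * ‖x‖ ^ 2 :=
  calc ⟪x, P x⟫ ≤ ‖x‖ * ‖P x‖ := real_inner_le_norm _ _
    _ ≤ ‖x‖ * (‖P‖ * ‖x‖) := by gcongr; exact P.le_opNorm x
    _ = ‖P‖ * ‖x‖ ^ 2 := by ring

theorem div_opNorm_add_one_mul_inner_apply_self_le (P : Z →L[ℝ] Z) {ε : ℝ} (hε : 0 ≤ ε) (x : Z) :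
    ε / (‖P‖ + 1) * ⟪x, P x⟫ ≤ ε * ‖x‖ ^ 2 :=
  calc ε / (‖P‖ + 1) * ⟪x, P x⟫ ≤ ε / (‖P‖ + 1) * ((‖P‖ + 1) * ‖x‖ ^ 2) := by
        gcongr
        linarith [real_inner_apply_self_le P x, sq_nonneg ‖x‖]
    _ = ε * ‖x‖ ^ 2 := by field_simp

theorem hasDerivAt_inner_apply_self (P : Z →L[ℝ] Z) {z : ℝ → Z} {z' : Z} {t : ℝ}
    (hz : HasDerivAt z z' t) :
    HasDerivAt (fun s => ⟪z s, P (z s)⟫) (⟪z t, P z'⟫ + ⟪z', P (z t)⟫) t :=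
  hz.inner ℝ (P.hasFDerivAt.comp_hasDerivAt t hz)

variable [CompleteSpace Z]

theorem inner_comp_adjoint_add_comp_adjoint_apply (T A P : Z →L[ℝ] Z) (x : Z) :
    ⟪x, (T.comp (P.comp (adjoint A)) + A.comp (P.comp (adjoint T))) x⟫ =
      ⟪adjoint T x, P (adjoint A x)⟫ + ⟪adjoint A x, P (adjoint T x)⟫ := by
  simp only [add_apply, comp_apply, inner_add_right, adjoint_inner_left]

end

theorem dual_LPI_dual_trajectory_stability_general
    {Z : Type*} [NormedAddCommGroup Z] [InnerProductSpace ℝ Z] [CompleteSpace Z]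
    (T A : Z →L[ℝ] Z) (ε : ℝ) (hε : 0 < ε)
    (P : Z →L[ℝ] Z)
    (hPcoer : ∃ α > (0:ℝ), ∀ x : Z, α * ‖x‖^2 ≤ ⟪x, P x⟫)
    (hLPI : ∀ x : Z,
      ⟪x, (T.comp (P.comp (adjoint A)) + A.comp (P.comp (adjoint T))) x⟫
        ≤ -ε * ‖(adjoint T) x‖^2) :
    ∀ y : ℝ → Z,
      (∀ t ∈ Set.Ici (0:ℝ), DifferentiableAt ℝ y t) →
      (∀ t ∈ Set.Ici (0:ℝ), (adjoint T) (deriv y t) = (adjoint A) (y t)) →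
      Tendsto (fun t => ‖(adjoint T) (y t)‖) atTop (𝓝 0) ∧
      ∃ M > (0:ℝ), ∃ k > (0:ℝ), ∀ t ∈ Set.Ici (0:ℝ),
        ⟪(adjoint T) (y t), P ((adjoint T) (y t))⟫
          ≤ M * Real.exp (-k * t) * ⟪(adjoint T) (y 0), P ((adjoint T) (y 0))⟫ := by
  intro y hdiff hdual
  obtain ⟨α, hα, hcoer⟩ := hPcoer
  set k := ε / (‖P‖ + 1)
  have hk : 0 < k := by positivity
  have hz : ∀ t ∈ Ici (0 : ℝ), HasDerivAt (fun s => adjoint T (y s)) (adjoint A (y t)) t :=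
    fun t ht => hdual t ht ▸ (adjoint T).hasFDerivAt.comp_hasDerivAt t (hdiff t ht).hasDerivAt
  have hV_deriv_le : ∀ t ∈ Ici (0 : ℝ),
      ⟪adjoint T (y t), P (adjoint A (y t))⟫ + ⟪adjoint A (y t), P (adjoint T (y t))⟫ ≤
        -k * ⟪adjoint T (y t), P (adjoint T (y t))⟫ := fun t _ => by
    have := div_opNorm_add_one_mul_inner_apply_self_le P hε.le (adjoint T (y t))
    linarith [inner_comp_adjoint_add_comp_adjoint_apply T A P (y t) ▸ hLPI (y t)]
  have hdecay := le_exp_mul_mul_of_hasDerivAt_le_mul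
    (fun t ht => hasDerivAt_inner_apply_self P (hz t ht)) hV_deriv_le
  refine ⟨?_, 1, one_pos, k, hk, fun t ht => by simpa using hdecay t ht⟩
  refine tendsto_norm_zero_of_mul_sq_le_exp (C := ⟪adjoint T (y 0), P (adjoint T (y 0))⟫)
    hα hk fun t ht => ?_
  rw [mul_comm _ (Real.exp _)]
  exact (hcoer _).trans (hdecay t ht)

/-- Intermediate conclusion in the proof of the Dual LPI for Stability
(Theorem 13): under the dual operator inequality, the dual PIE `T* ẏ = A* y`
is asymptotically stable, and the Lyapunov function decays exponentially. -/
theorem dual_LPI_dual_trajectory_stability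
    {Z : Type*} [NormedAddCommGroup Z] [InnerProductSpace ℝ Z] [CompleteSpace Z]
    (T A : Z →L[ℝ] Z) (ε : ℝ) (hε : 0 < ε)
    (P : Z →L[ℝ] Z) (hPsa : IsSelfAdjoint P)
    (hPcoer : ∃ α > (0:ℝ), ∀ x : Z, α * ‖x‖^2 ≤ ⟪x, P x⟫)
    (hLPI : ∀ x : Z,
      ⟪x, (T.comp (P.comp (adjoint A)) + A.comp (P.comp (adjoint T))) x⟫
        ≤ -ε * ‖(adjoint T) x‖^2) :
    ∀ y : ℝ → Z,
      (∀ t ∈ Set.Ici (0:ℝ), DifferentiableAt ℝ y t) →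
      (∀ t ∈ Set.Ici (0:ℝ), (adjoint T) (deriv y t) = (adjoint A) (y t)) →
      Tendsto (fun t => ‖(adjoint T) (y t)‖) atTop (𝓝 0) ∧
      ∃ M > (0:ℝ), ∃ k > (0:ℝ), ∀ t ∈ Set.Ici (0:ℝ),
        ⟪(adjoint T) (y t), P ((adjoint T) (y t))⟫
          ≤ M * Real.exp (-k * t) * ⟪(adjoint T) (y 0), P ((adjoint T) (y 0))⟫ :=
  dual_LPI_dual_trajectory_stability_general T A ε hε P hPcoer hLPI
end

section
/- Let Z be a real Hilbert space, let T̂, Â : Z → Z, B̂ : Z → ℝ^q, Ĉ : ℝ^r → Z be bounded linear operators and D̂ : ℝ^r → ℝ^q linear, and let γ > 0 and P : Z → Z be a bounded self-adjoint linear operator. Suppose that for all v ∈ ℝ^r, u ∈ ℝ^q, x ∈ Z: −γ‖v‖² − γ‖u‖² + 2⟨v, D̂* u⟩ + 2⟨v, Ĉ* P T̂ x⟩ + 2⟨u, B̂ x⟩ + ⟨x, (T̂* P Â + Â* P T̂) x⟩ ≤ 0. Let w : [0,∞) → ℝ^r be continuous and let x : [0,∞) → Z be differentiable with T̂ x'(t)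 = Â x(t) + Ĉ w(t) for all t ≥ 0, and set z(t) := B̂ x(t) + D̂ w(t). Then the function V(t) := ⟨T̂ x(t), P T̂ x(t)⟩ is differentiable and satisfies V'(t) ≤ γ‖w(t)‖² − (1/γ)‖z(t)‖² for all t ≥ 0. -/
open MeasureTheory Filter Topology ContinuousLinearMap
open scoped RealInnerProductSpace

/-- Dissipation inequality (key step in the appendix proof of Theorem 16):
under the block quadratic-form inequality, along solutions of
`T̂ ẋ = Â x + Ĉ w` with `z = B̂ x + D̂ w`, the storage function
`V(t) = ⟨T̂ x(t), P T̂ x(t)⟩` is differentiable and satisfies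
`V'(t) ≤ γ‖w(t)‖² − (1/γ)‖z(t)‖²`. -/
theorem Hinf_dissipation_inequality
    {Z : Type*} [NormedAddCommGroup Z] [InnerProductSpace ℝ Z] [CompleteSpace Z]
    {q r : ℕ}
    (That Ahat : Z →L[ℝ] Z)
    (Bhat : Z →L[ℝ] EuclideanSpace ℝ (Fin q))
    (Chat : EuclideanSpace ℝ (Fin r) →L[ℝ] Z)
    (Dhat : EuclideanSpace ℝ (Fin r) →L[ℝ] EuclideanSpace ℝ (Fin q))
    (γ : ℝ) (hγ : 0 < γ)
    (P : Z →L[ℝ] Z) (hPsa : IsSelfAdjoint P)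
    (hLPI : ∀ (v : EuclideanSpace ℝ (Fin r)) (u : EuclideanSpace ℝ (Fin q)) (x : Z),
      -γ * ‖v‖^2 - γ * ‖u‖^2 + 2 * ⟪v, (adjoint Dhat) u⟫
        + 2 * ⟪v, (adjoint Chat) (P (That x))⟫ + 2 * ⟪u, Bhat x⟫
        + ⟪x, ((adjoint That).comp (P.comp Ahat)
              + (adjoint Ahat).comp (P.comp That)) x⟫ ≤ 0)
    (w : ℝ → EuclideanSpace ℝ (Fin r)) (hw : Continuous w)
    (x : ℝ → Z)
    (hx : ∀ t ∈ Set.Ici (0:ℝ), DifferentiableAt ℝ x t)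
    (hxeq : ∀ t ∈ Set.Ici (0:ℝ),
      That (deriv x t) = Ahat (x t) + Chat (w t))
    (z : ℝ → EuclideanSpace ℝ (Fin q))
    (hz : ∀ t, z t = Bhat (x t) + Dhat (w t)) :
    ∀ t ∈ Set.Ici (0:ℝ),
      DifferentiableAt ℝ (fun s => ⟪That (x s), P (That (x s))⟫) t ∧
      deriv (fun s => ⟪That (x s), P (That (x s))⟫) t
        ≤ γ * ‖w t‖^2 - (1/γ) * ‖z t‖^2 := by
  intro t ht
  have hd : HasDerivAt x (deriv x t) t := (hx t ht).hasDerivAt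
  have hT : HasDerivAt (fun s => That (x s)) (That (deriv x t)) t :=
    That.hasFDerivAt.comp_hasDerivAt t hd
  have hPT : HasDerivAt (fun s => P (That (x s))) (P (That (deriv x t))) t :=
    P.hasFDerivAt.comp_hasDerivAt t hT
  have hV : HasDerivAt (fun s => ⟪That (x s), P (That (x s))⟫)
      (⟪That (x t), P (That (deriv x t))⟫ + ⟪That (deriv x t), P (That (x t))⟫) t :=
    hT.inner ℝ hPT
  refine ⟨hV.differentiableAt, ?_⟩
  rw [hV.deriv]
  -- self-adjointness: P symmetric
  have hPsymm : ∀ a b : Z, ⟪a, P b⟫ = ⟪P a, b⟫ := fun a b => (hPsa.isSymmetric a b).symm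
  have hTd := hxeq t ht
  have key := hLPI (w t) ((1/γ) • z t) (x t)
  -- expand the quadratic form in key
  have hquad : ⟪x t, ((adjoint That).comp (P.comp Ahat)
              + (adjoint Ahat).comp (P.comp That)) (x t)⟫
      = 2 * ⟪Ahat (x t), P (That (x t))⟫ := by
    simp only [ContinuousLinearMap.add_apply, ContinuousLinearMap.comp_apply,
      inner_add_right, adjoint_inner_right]
    have h1 : ⟪That (x t), P (Ahat (x t))⟫ = ⟪Ahat (x t), P (That (x t))⟫ := by
      rw [hPsymm, real_inner_comm]
    rw [h1]; ring
  -- the derivative equals quad + 2⟪w, Ĉ* P T̂ x⟫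
  have hderiv : ⟪That (x t), P (That (deriv x t))⟫ + ⟪That (deriv x t), P (That (x t))⟫
      = 2 * ⟪Ahat (x t), P (That (x t))⟫ + 2 * ⟪w t, (adjoint Chat) (P (That (x t)))⟫ := by
    have h1 : ⟪That (x t), P (That (deriv x t))⟫ = ⟪That (deriv x t), P (That (x t))⟫ := by
      rw [hPsymm, real_inner_comm]
    rw [h1, hTd, inner_add_left, adjoint_inner_right]
    ring
  have hu1 : ⟪w t, (adjoint Dhat) ((1/γ) • z t)⟫ = (1/γ) * ⟪z t, Dhat (w t)⟫ := by
    rw [_root_.map_smul, inner_smul_right, adjoint_inner_right, real_inner_comm]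
  have hu2 : ⟪(1/γ) • z t, Bhat (x t)⟫ = (1/γ) * ⟪z t, Bhat (x t)⟫ := by
    rw [inner_smul_left]; norm_num
  have hu3 : ‖(1/γ) • z t‖^2 = (1/γ)^2 * ‖z t‖^2 := by
    rw [norm_smul, mul_pow, Real.norm_eq_abs, abs_of_pos (by positivity : (0:ℝ) < 1/γ)]
  have hz2 : ⟪z t, Dhat (w t)⟫ + ⟪z t, Bhat (x t)⟫ = ‖z t‖^2 := by
    rw [← inner_add_right, add_comm (Dhat (w t)), ← hz t, real_inner_self_eq_norm_sq]
  rw [hderiv]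
  rw [hquad, hu1, hu2, hu3] at key
  have hinv : γ * ((1/γ)^2 * ‖z t‖^2) = 1/γ * ‖z t‖^2 := by
    field_simp
  have hsum : 1/γ * ⟪z t, Dhat (w t)⟫ + 1/γ * ⟪z t, Bhat (x t)⟫ = 1/γ * ‖z t‖^2 := by
    rw [← mul_add, hz2]
  linarith [key]
end

section
/- Let Z be a real Hilbert space, let T̂, Â : Z → Z, B̂ : Z → ℝ^q, Ĉ : ℝ^r → Z be bounded linear operators and D̂ : ℝ^r → ℝ^q linear, and let γ > 0 and P : Z → Z be a bounded self-adjoint coercive linear operator (i.e., ⟨x, P x⟩ ≥ α‖x‖² for some α > 0 and all x). Suppose that for all v ∈ ℝ^r, u ∈ ℝ^q, x ∈ Z: −γ‖v‖² − γ‖u‖² + 2⟨v, D̂* u⟩ + 2⟨v, Ĉ* P T̂ x⟩ + 2⟨u, B̂ x⟩ + ⟨x, (T̂* P Â + Â* P T̂) x⟩ ≤ 0. Then for every continuous square-integrable w : [0,∞) → ℝ^r and every differentiable x : [0,∞) → Z with x(0) = 0 and T̂ x'(t) = Â x(t) + Ĉ w(t) for all t ≥ 0, the output z(t) := B̂ x(t)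 + D̂ w(t) satisfies ∫₀^∞ ‖z(t)‖² dt ≤ γ² ∫₀^∞ ‖w(t)‖² dt. -/
open MeasureTheory Filter Topology ContinuousLinearMap
open scoped RealInnerProductSpace

/-!
The storage function `V t = ⟪T̂ x t, P (T̂ x t)⟫` is nonnegative by coercivity of `P` and vanishes
at `t = 0`. Since `P` is self-adjoint, `V' = 2 ⟪T̂ x', P T̂ x⟫ = 2 ⟪Â x + Ĉ w, P T̂ x⟫`, and the LPI
evaluated at `(v, u, x) = (w, γ⁻¹ z, x)` is exactly the dissipation inequality
`V' ≤ γ ‖w‖² - γ⁻¹ ‖z‖²`. Integrating over `[0, T]` gives `∫₀ᵀ ‖z‖² ≤ γ² ∫₀ᵀ ‖w‖²`; the right side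
is bounded by `γ² ∫₀^∞ ‖w‖²`, so `‖z‖²` is integrable on `[0, ∞)` and the bound passes to the limit.
-/

open Set

theorem HasDerivAt.inner_apply_self_of_isSelfAdjoint {E : Type*} [NormedAddCommGroup E]
    [InnerProductSpace ℝ E] [CompleteSpace E] {P : E →L[ℝ] E} (hP : IsSelfAdjoint P)
    {y : ℝ → E} {y' : E} {t : ℝ} (hy : HasDerivAt y y' t) :
    HasDerivAt (fun s => ⟪y s, P (y s)⟫) (2 * ⟪y', P (y t)⟫) t := by
  refine (hy.inner ℝ (P.hasFDerivAt.comp_hasDerivAt t hy)).congr_deriv ?_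
  rw [Function.comp_apply, ← hP.isSymmetric.apply_clm, real_inner_comm]
  ring

section QuadraticForm

variable {E F G : Type*} [NormedAddCommGroup E] [InnerProductSpace ℝ E] [CompleteSpace E]
  [NormedAddCommGroup F] [InnerProductSpace ℝ F] [CompleteSpace F]
  [NormedAddCommGroup G] [InnerProductSpace ℝ G] [CompleteSpace G]

theorem inner_adjoint_comp_add_adjoint_comp_apply_self {P : E →L[ℝ] E} (hP : IsSelfAdjoint P)
    (T A : E →L[ℝ] E) (x : E) :
    ⟪x, ((adjoint T).comp (P.comp A) + (adjoint A).comp (P.comp T)) x⟫ =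
      2 * ⟪A x, P (T x)⟫ := by
  simp only [add_apply, comp_apply, inner_add_right, adjoint_inner_right]
  rw [← hP.isSymmetric.apply_clm, real_inner_comm (P (T x))]
  ring

theorem two_inner_le_of_lpi {γ : ℝ} (hγ : 0 < γ) {P : E →L[ℝ] E} (hP : IsSelfAdjoint P)
    (T A : E →L[ℝ] E) (B : E →L[ℝ] G) (C : F →L[ℝ] E) (D : F →L[ℝ] G)
    (hLPI : ∀ (v : F) (u : G) (x : E),
      -γ * ‖v‖^2 - γ * ‖u‖^2 + 2 * ⟪v, (adjoint D) u⟫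
        + 2 * ⟪v, (adjoint C) (P (T x))⟫ + 2 * ⟪u, B x⟫
        + ⟪x, ((adjoint T).comp (P.comp A) + (adjoint A).comp (P.comp T)) x⟫ ≤ 0)
    (x : E) (v : F) :
    2 * ⟪A x + C v, P (T x)⟫ ≤ γ * ‖v‖ ^ 2 - γ⁻¹ * ‖B x + D v‖ ^ 2 := by
  set z := B x + D v
  have hz : ⟪D v, γ⁻¹ • z⟫ + ⟪γ⁻¹ • z, B x⟫ = γ⁻¹ * ‖z‖ ^ 2 := by
    rw [real_inner_comm _ (D v), ← inner_add_right, add_comm, real_inner_smul_left,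
      real_inner_self_eq_norm_sq]
  have hLPIz := hLPI v (γ⁻¹ • z) x
  simp only [adjoint_inner_right] at hLPIz
  rw [inner_adjoint_comp_add_adjoint_comp_apply_self hP, norm_smul,
    Real.norm_of_nonneg (inv_nonneg.2 hγ.le)] at hLPIz
  have hγz : γ * (γ⁻¹ * ‖z‖) ^ 2 = γ⁻¹ * ‖z‖ ^ 2 := by field_simp
  rw [inner_add_left]
  linarith

end QuadraticForm

section ImproperIntegral

variable {f : ℝ → ℝ} {a : ℝ}

theorem intervalIntegral_le_integral_Ioi {b : ℝ} (hab : a ≤ b) (hf0 : ∀ t ∈ Ioi a, 0 ≤ f t)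
    (hf : IntegrableOn f (Ioi a)) : ∫ t in a..b, f t ≤ ∫ t in Ioi a, f t := by
  rw [intervalIntegral.integral_of_le hab]
  exact setIntegral_mono_set hf (ae_restrict_of_forall_mem measurableSet_Ioi hf0)
    Ioc_subset_Ioi_self.eventuallyLE

theorem integral_Ioi_le_of_intervalIntegral_le {C : ℝ} (hf0 : ∀ t ∈ Ioi a, 0 ≤ f t)
    (hf : ∀ b, IntegrableOn f (Ioc a b)) (h : ∀ b ≥ a, ∫ t in a..b, f t ≤ C) :
    ∫ t in Ioi a, f t ≤ C := by
  have hnorm : ∀ b ≥ a, ∫ t in a..b, ‖f t‖ = ∫ t in a..b, f t := fun b hab => by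
    rw [intervalIntegral.integral_of_le hab, intervalIntegral.integral_of_le hab]
    exact setIntegral_congr_fun measurableSet_Ioc fun t ht =>
      Real.norm_of_nonneg (hf0 t (Ioc_subset_Ioi_self ht))
  have hint : IntegrableOn f (Ioi a) :=
    integrableOn_Ioi_of_intervalIntegral_norm_bounded C a hf tendsto_id
      (eventually_ge_atTop a |>.mono fun b hab => (hnorm b hab).trans_le (h b hab))
  exact le_of_tendsto (intervalIntegral_tendsto_integral_Ioi a hint tendsto_id)
    (eventually_ge_atTop a |>.mono h)

theorem integral_Ioi_le_mul_integral_Ioi {g : ℝ → ℝ} {c : ℝ} (hc : 0 ≤ c)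
    (hf0 : ∀ t ∈ Ioi a, 0 ≤ f t) (hg0 : ∀ t ∈ Ioi a, 0 ≤ g t)
    (hf : ∀ b, IntegrableOn f (Ioc a b)) (hg : IntegrableOn g (Ioi a))
    (h : ∀ b ≥ a, ∫ t in a..b, f t ≤ c * ∫ t in a..b, g t) :
    ∫ t in Ioi a, f t ≤ c * ∫ t in Ioi a, g t :=
  integral_Ioi_le_of_intervalIntegral_le hf0 hf fun b hab =>
    (h b hab).trans (mul_le_mul_of_nonneg_left (intervalIntegral_le_integral_Ioi hab hg0 hg) hc)

end ImproperIntegral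

theorem intervalIntegral_le_sq_mul_of_dissipation {V V' u y : ℝ → ℝ} {γ s T : ℝ} (hγ : 0 < γ)
    (hsT : s ≤ T) (hV : V s ≤ V T) (hVc : ContinuousOn V (Icc s T))
    (hV' : ∀ t ∈ Ioo s T, HasDerivAt V (V' t) t)
    (hdiss : ∀ t ∈ Ioo s T, V' t ≤ γ * u t - γ⁻¹ * y t)
    (hu : IntegrableOn u (Icc s T)) (hy : IntegrableOn y (Icc s T)) :
    ∫ t in s..T, y t ≤ γ ^ 2 * ∫ t in s..T, u t := by
  have hu' : IntervalIntegrable u volume s T :=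
    (intervalIntegrable_iff_integrableOn_Icc_of_le hsT).2 hu
  have hy' : IntervalIntegrable y volume s T :=
    (intervalIntegrable_iff_integrableOn_Icc_of_le hsT).2 hy
  have hVT : V T - V s ≤ ∫ t in s..T, (γ * u t - γ⁻¹ * y t) :=
    intervalIntegral.sub_le_integral_of_hasDeriv_right_of_le hsT hVc
      (fun t ht => (hV' t ht).hasDerivWithinAt) ((hu.const_mul γ).sub (hy.const_mul γ⁻¹)) hdiss
  rw [intervalIntegral.integral_sub (hu'.const_mul γ) (hy'.const_mul γ⁻¹),
    intervalIntegral.integral_const_mul, intervalIntegral.integral_const_mul] at hVT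
  have h : γ⁻¹ * ∫ t in s..T, y t ≤ γ * ∫ t in s..T, u t := by linarith
  calc ∫ t in s..T, y t = γ * (γ⁻¹ * ∫ t in s..T, y t) := by field_simp
    _ ≤ γ * (γ * ∫ t in s..T, u t) := mul_le_mul_of_nonneg_left h hγ.le
    _ = γ ^ 2 * ∫ t in s..T, u t := by ring

/-- Intermediate conclusion in the appendix proof of the H∞ controller
synthesis LPI (Theorem 16): the block quadratic-form inequality with `P`
self-adjoint, bounded and coercive implies the L₂-gain bound `γ` for the
system `T̂ ẋ = Â x + Ĉ w`, `z = B̂ x + D̂ w` with zero initial condition. -/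
theorem Hinf_L2_gain_from_LPI
    {Z : Type*} [NormedAddCommGroup Z] [InnerProductSpace ℝ Z] [CompleteSpace Z]
    {q r : ℕ}
    (That Ahat : Z →L[ℝ] Z)
    (Bhat : Z →L[ℝ] EuclideanSpace ℝ (Fin q))
    (Chat : EuclideanSpace ℝ (Fin r) →L[ℝ] Z)
    (Dhat : EuclideanSpace ℝ (Fin r) →L[ℝ] EuclideanSpace ℝ (Fin q))
    (γ : ℝ) (hγ : 0 < γ)
    (P : Z →L[ℝ] Z) (hPsa : IsSelfAdjoint P)
    (hPcoer : ∃ α > (0:ℝ), ∀ x : Z, α * ‖x‖^2 ≤ ⟪x, P x⟫)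
    (hLPI : ∀ (v : EuclideanSpace ℝ (Fin r)) (u : EuclideanSpace ℝ (Fin q)) (x : Z),
      -γ * ‖v‖^2 - γ * ‖u‖^2 + 2 * ⟪v, (adjoint Dhat) u⟫
        + 2 * ⟪v, (adjoint Chat) (P (That x))⟫ + 2 * ⟪u, Bhat x⟫
        + ⟪x, ((adjoint That).comp (P.comp Ahat)
              + (adjoint Ahat).comp (P.comp That)) x⟫ ≤ 0) :
    ∀ w : ℝ → EuclideanSpace ℝ (Fin r),
      ContinuousOn w (Set.Ici (0:ℝ)) →
      IntegrableOn (fun t => ‖w t‖^2) (Set.Ici (0:ℝ)) →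
      ∀ x : ℝ → Z, (∀ t ∈ Set.Ici (0:ℝ), DifferentiableAt ℝ x t) → x 0 = 0 →
      (∀ t ∈ Set.Ici (0:ℝ), That (deriv x t) = Ahat (x t) + Chat (w t)) →
      (∫ t in Set.Ici (0:ℝ), ‖Bhat (x t) + Dhat (w t)‖^2)
        ≤ γ^2 * ∫ t in Set.Ici (0:ℝ), ‖w t‖^2 := by
  intro w hwc hwint x hx hx0 hode
  obtain ⟨α, hα, hcoer⟩ := hPcoer
  have hV : ∀ t ∈ Ici (0 : ℝ), HasDerivAt (fun s => ⟪That (x s), P (That (x s))⟫)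
      (2 * ⟪Ahat (x t) + Chat (w t), P (That (x t))⟫) t := fun t ht => by
    rw [← hode t ht]
    exact (That.hasFDerivAt.comp_hasDerivAt t (hx t ht).hasDerivAt
      ).inner_apply_self_of_isSelfAdjoint hPsa
  have hxc : ContinuousOn x (Ici 0) := fun t ht => (hx t ht).continuousAt.continuousWithinAt
  have hwc2 : ContinuousOn (fun t => ‖w t‖ ^ 2) (Ici 0) := hwc.norm.pow 2
  have hzc2 : ContinuousOn (fun t => ‖Bhat (x t) + Dhat (w t)‖ ^ 2) (Ici 0) :=
    ((Bhat.continuous.comp_continuousOn hxc).add (Dhat.continuous.comp_continuousOn hwc)).norm.pow 2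
  have hIcc : ∀ T : ℝ, Icc 0 T ⊆ Ici 0 := fun _ => Icc_subset_Ici_self
  rw [integral_Ici_eq_integral_Ioi, integral_Ici_eq_integral_Ioi]
  refine integral_Ioi_le_mul_integral_Ioi (sq_nonneg γ) (fun t _ => sq_nonneg _)
    (fun t _ => sq_nonneg _)
    (fun T => ((hzc2.mono (hIcc T)).integrableOn_compact isCompact_Icc).mono_set
      Ioc_subset_Icc_self)
    (hwint.mono_set Ioi_subset_Ici_self) fun T hT => ?_
  refine intervalIntegral_le_sq_mul_of_dissipation hγ hT ?_
    (fun t ht => (hV t (hIcc T ht)).continuousAt.continuousWithinAt)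
    (fun t ht => hV t (Ioo_subset_Icc_self.trans (hIcc T) ht))
    (fun t _ => two_inner_le_of_lpi hγ hPsa That Ahat Bhat Chat Dhat hLPI (x t) (w t))
    ((hwc2.mono (hIcc T)).integrableOn_compact isCompact_Icc)
    ((hzc2.mono (hIcc T)).integrableOn_compact isCompact_Icc)
  simp only [hx0, map_zero, inner_zero_left]
  exact (by positivity : 0 ≤ α * ‖That (x T)‖ ^ 2).trans (hcoer _)
end

section
/- Let Z be a real Hilbert space and let T, A : Z → Z be bounded linear operators. Suppose x : [0,∞) → Z is differentiable with continuous derivative, T x'(t) = A x(t) for all t ≥ 0, and T x(t) → 0 in Z as t → ∞; and suppose x̄ : [0,∞) → Z is differentiable with continuous derivative and T* x̄'(t) = A* x̄(t) for all t ≥ 0. Then ⟨T* x̄(t), x(0)⟩ = ⟨x̄(t), T x(0)⟩ → 0 as t → ∞. -/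
open MeasureTheory Filter Topology ContinuousLinearMap
open scoped RealInnerProductSpace

/-- Weak-convergence corollary of the conservation identity (final step of the
Dual Stability Theorem): if the primal trajectory satisfies `T x(t) → 0`, then
for any dual trajectory `x̄`,
`⟨T* x̄(t), x(0)⟩ = ⟨x̄(t), T x(0)⟩ → 0` as `t → ∞`. -/
theorem dual_weak_convergence
    {Z : Type*} [NormedAddCommGroup Z] [InnerProductSpace ℝ Z] [CompleteSpace Z]
    (T A : Z →L[ℝ] Z) (x xb : ℝ → Z)
    (hx : ∀ t ∈ Set.Ici (0:ℝ), DifferentiableAt ℝ x t)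
    (hx' : ContinuousOn (deriv x) (Set.Ici (0:ℝ)))
    (hxeq : ∀ t ∈ Set.Ici (0:ℝ), T (deriv x t) = A (x t))
    (hxlim : Tendsto (fun t => T (x t)) atTop (𝓝 0))
    (hxb : ∀ t ∈ Set.Ici (0:ℝ), DifferentiableAt ℝ xb t)
    (hxb' : ContinuousOn (deriv xb) (Set.Ici (0:ℝ)))
    (hxbeq : ∀ t ∈ Set.Ici (0:ℝ),
      (adjoint T) (deriv xb t) = (adjoint A) (xb t)) :
    (∀ t : ℝ, ⟪(adjoint T) (xb t), x 0⟫ = ⟪xb t, T (x 0)⟫) ∧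
    Tendsto (fun t => ⟪xb t, T (x 0)⟫) atTop (𝓝 0) := by
  refine ⟨fun t => adjoint_inner_left T (x 0) (xb t), ?_⟩
  -- conservation identity: for s ≥ 0, ⟪xb s, T (x 0)⟫ = ⟪xb 0, T (x s)⟫
  have key : ∀ s : ℝ, 0 ≤ s → ⟪xb s, T (x 0)⟫ = ⟪xb 0, T (x s)⟫ := by
    intro s hs
    set f : ℝ → ℝ := fun t => ⟪xb (s - t), T (x t)⟫ with hf
    have hder : ∀ t ∈ Set.Icc (0:ℝ) s, HasDerivAt f 0 t := by
      intro t ht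
      have ht0 : (0:ℝ) ≤ t := ht.1
      have hts : (0:ℝ) ≤ s - t := by linarith [ht.2]
      have hu : HasDerivAt (fun t => xb (s - t)) ((-1 : ℝ) • deriv xb (s - t)) t := by
        have h1 : HasDerivAt xb (deriv xb (s - t)) (s - t) :=
          (hxb _ hts).hasDerivAt
        have h2 : HasDerivAt (fun t : ℝ => s - t) (-1) t := by
          simpa using (hasDerivAt_id t).const_sub s
        exact h1.scomp t h2
      have hv : HasDerivAt (fun t => T (x t)) (T (deriv x t)) t :=
        T.hasFDerivAt.comp_hasDerivAt t (hx _ ht0).hasDerivAt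
      have hsum := hu.inner ℝ hv
      have e1 : ⟪deriv xb (s - t), T (x t)⟫ = ⟪xb (s - t), A (x t)⟫ := by
        rw [← adjoint_inner_left, hxbeq _ hts, adjoint_inner_left]
      have hz : ⟪xb (s - t), T (deriv x t)⟫ + -⟪deriv xb (s - t), T (x t)⟫
          = 0 := by
        rw [hxeq _ ht0, e1]; ring
      simpa [hz] using hsum
    have hcont : ContinuousOn f (Set.Icc 0 s) := fun t ht =>
      ((hder t ht).continuousAt).continuousWithinAt
    have hconst := constant_of_has_deriv_right_zero hcont
      (fun t ht => ((hder t (Set.mem_Icc_of_Ico ht)).hasDerivWithinAt))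
    have := hconst s (Set.right_mem_Icc.mpr hs)
    simpa [hf] using this.symm
  have heq : (fun t => ⟪xb t, T (x 0)⟫) =ᶠ[atTop] fun t => ⟪xb 0, T (x t)⟫ := by
    filter_upwards [eventually_ge_atTop (0:ℝ)] with t ht using key t ht
  have hlim : Tendsto (fun t => ⟪xb 0, T (x t)⟫) atTop (𝓝 (0:ℝ)) := by
    have h0 : Tendsto (fun t => (⟪xb 0, T (x t)⟫ : ℝ)) atTop (𝓝 (⟪xb 0, (0:Z)⟫ : ℝ)) :=
      Tendsto.inner tendsto_const_nhds hxlim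
    simpa using h0
  exact hlim.congr' heq.symm
end
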